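/- A concept c of an extremal class C ⊆ {0,1}^n is a corner of C (i.e., C \ {c} is extremal) if and only if c lies in exactly one maximal cube of C. -/

import Mathlib

variable {n : ℕ}

/-- `S` is shattered by the concept class `C`. -/
def Shatters (C : Set (Fin n → Bool)) (S : Finset (Fin n)) : Prop :=
  ∀ f : Fin n → Bool, ∃ c ∈ C, ∀ x ∈ S, c x = f x

/-- `B` is a cube of `C` with dimension set `S`. -/
def IsCube (C B : Set (Fin n → Bool)) (S : Finset (Fin n)) : Prop :=
  B ⊆ C ∧ (∀ b ∈ B, ∀ b' ∈ B, ∀ x, x ∉ S → b x = b' x) ∧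
    (∀ f : Fin n → Bool, ∃ b ∈ B, ∀ x ∈ S, b x = f x)

/-- `S` is strongly shattered by `C`. -/
def StronglyShatters (C : Set (Fin n → Bool)) (S : Finset (Fin n)) : Prop :=
  ∃ B, IsCube C B S

/-- `C` is extremal: every shattered set is strongly shattered. -/
def Extremal (C : Set (Fin n → Bool)) : Prop :=
  ∀ S, Shatters C S → StronglyShatters C S

/-!
Every class satisfies `|st C| ≤ |C| ≤ |sh C|` (reverse Sauer–Shelah and Pajor), so `C` is
extremal iff `|st C| = |C|`. Splitting `C` along a coordinate `i` into two slices, `st C` is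
covered by the sets strongly shattered by a slice together with the sets `insert i S` for `S`
strongly shattered by both; for extremal `C` this count is tight, so the slices are extremal and
every such `insert i S` is strongly shattered by `C`. By induction over slices, a maximal cube of
an extremal class is its only cube with that dimension set. Hence removing `c` deletes from
`st C` exactly the dimension sets of the maximal cubes through `c`, and `C \ {c}`, of size
`|C| - 1`, is extremal iff exactly one set is deleted.
-/

section Cubes

variable {C D B : Set (Fin n → Bool)} {S T : Finset (Fin n)} {a c : Fin n → Bool}
  {i : Fin n}

def subcube (a : Fin n → Bool) (S : Finset (Fin n)) : Set (Fin n → Bool) :=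
  {f | ∀ x ∉ S, f x = a x}

def IsMaximalCube (C B : Set (Fin n → Bool)) (S : Finset (Fin n)) : Prop :=
  IsCube C B S ∧ ∀ B' S', IsCube C B' S' → B ⊆ B' → B = B'

lemma mem_subcube_self (a : Fin n → Bool) (S : Finset (Fin n)) : a ∈ subcube a S :=
  fun _ _ => rfl

lemma subcube_mono (h : S ⊆ T) : subcube a S ⊆ subcube a T :=
  fun _ hf x hx => hf x fun hxS => hx (h hxS)

lemma subcube_eq_of_mem (h : c ∈ subcube a S) : subcube c S = subcube a S := by
  ext f
  exact forall₂_congr fun x hx => by rw [h x hx]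

lemma update_mem_subcube (hi : i ∈ S) (b : Bool) : Function.update a i b ∈ subcube a S :=
  fun _ hx => Function.update_of_ne (ne_of_mem_of_not_mem hi hx).symm _ _

lemma subcube_subset_subcube_iff : subcube a S ⊆ subcube a T ↔ S ⊆ T := by
  refine ⟨fun h i hiS => ?_, subcube_mono⟩
  by_contra hiT
  simpa using h (update_mem_subcube hiS (!a i)) i hiT

lemma subcube_injective (a : Fin n → Bool) : Function.Injective (subcube a) := fun _ _ h =>
  (subcube_subset_subcube_iff.1 h.le).antisymm (subcube_subset_subcube_iff.1 h.ge)

lemma isCube_subcube (h : subcube a S ⊆ C) : IsCube C (subcube a S) S :=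
  ⟨h, fun _ hf _ hg x hx => (hf x hx).trans (hg x hx).symm,
    fun f => ⟨fun x => if x ∈ S then f x else a x, fun _ hx => if_neg hx,
      fun _ hx => if_pos hx⟩⟩

lemma IsCube.nonempty (h : IsCube C B S) : B.Nonempty :=
  let ⟨b, hb, _⟩ := h.2.2 fun _ => false
  ⟨b, hb⟩

lemma IsCube.eq_subcube (h : IsCube C B S) (ha : a ∈ B) : B = subcube a S := by
  refine Set.Subset.antisymm (fun f hf x hx => h.2.1 f hf a ha x hx) fun f hf => ?_
  obtain ⟨b, hb, hbf⟩ := h.2.2 f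
  convert hb using 1
  funext x
  by_cases hx : x ∈ S
  · exact (hbf x hx).symm
  · exact (hf x hx).trans (h.2.1 a ha b hb x hx)

lemma IsCube.mono (h : IsCube C B S) (hCD : C ⊆ D) : IsCube D B S :=
  ⟨h.1.trans hCD, h.2⟩

lemma stronglyShatters_iff : StronglyShatters C S ↔ ∃ a, subcube a S ⊆ C :=
  ⟨fun ⟨_, hB⟩ => let ⟨a, ha⟩ := hB.nonempty; ⟨a, hB.eq_subcube ha ▸ hB.1⟩,
    fun ⟨_, ha⟩ => ⟨_, isCube_subcube ha⟩⟩

lemma StronglyShatters.mono (h : StronglyShatters C S) (hCD : C ⊆ D) : StronglyShatters D S :=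
  let ⟨B, hB⟩ := h
  ⟨B, hB.mono hCD⟩

lemma StronglyShatters.shatters (h : StronglyShatters C S) : Shatters C S := fun f =>
  let ⟨_, hB⟩ := h
  let ⟨b, hb, hbf⟩ := hB.2.2 f
  ⟨b, hB.1 hb, hbf⟩

lemma IsMaximalCube.of_subset (h : IsMaximalCube C B S) (hB : B ⊆ D) (hD : D ⊆ C) :
    IsMaximalCube D B S :=
  ⟨⟨hB, h.1.2⟩, fun B' S' hB' => h.2 B' S' (hB'.mono hD)⟩

lemma isMaximalCube_subcube_iff :
    IsMaximalCube C (subcube a S) S ↔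
      subcube a S ⊆ C ∧ ∀ i ∉ S, ¬ subcube a (insert i S) ⊆ C := by
  refine ⟨fun h => ⟨h.1.1, fun i hi hsub => hi ?_⟩, fun ⟨hsub, hmax⟩ =>
    ⟨isCube_subcube hsub, fun B' S' hB' hle => ?_⟩⟩
  · have := subcube_injective a
      (h.2 _ _ (isCube_subcube hsub) (subcube_mono (Finset.subset_insert i S)))
    exact Finset.insert_eq_self.1 this.symm
  · obtain rfl := hB'.eq_subcube (hle (mem_subcube_self a S))
    have hSS' := subcube_subset_subcube_iff.1 hle
    rcases hSS'.eq_or_ssubset with rfl | hlt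
    · rfl
    · obtain ⟨i, hiS', hiS⟩ := Finset.exists_of_ssubset hlt
      exact absurd ((subcube_mono (Finset.insert_subset hiS' hSS')).trans hB'.1) (hmax i hiS)

end Cubes

section Slices

variable {C : Set (Fin n → Bool)} {S : Finset (Fin n)} {a f g : Fin n → Bool} {i : Fin n}

def slice (C : Set (Fin n → Bool)) (i : Fin n) (b : Bool) : Set (Fin n → Bool) :=
  {f ∈ C | f i = b}

def stronglyShattered (C : Set (Fin n → Bool)) : Set (Finset (Fin n)) :=
  {S | StronglyShatters C S}

def shattered (C : Set (Fin n → Bool)) : Set (Finset (Fin n)) :=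
  {S | Shatters C S}

lemma slice_subset (C : Set (Fin n → Bool)) (i : Fin n) (b : Bool) : slice C i b ⊆ C :=
  fun _ hf => hf.1

lemma ncard_slice_false_add_ncard_slice_true (C : Set (Fin n → Bool)) (i : Fin n) :
    (slice C i false).ncard + (slice C i true).ncard = C.ncard := by
  rw [← Set.ncard_union_eq]
  · congr 1
    ext f
    cases hf : f i <;> simp [slice, hf]
  · exact Set.disjoint_left.2 fun _ h0 h1 => Bool.false_ne_true (h0.2.symm.trans h1.2)

lemma ncard_slice_lt (hf : f ∈ C) (hg : g ∈ C) (hfg : f i ≠ g i) (b : Bool) :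
    (slice C i b).ncard < C.ncard := by
  refine Set.ncard_lt_ncard ((Set.ssubset_iff_of_subset (slice_subset C i b)).2 ?_)
  by_cases hb : f i = b
  · exact ⟨g, hg, fun h => hfg (hb.trans h.2.symm)⟩
  · exact ⟨f, hf, fun h => hb h.2⟩

lemma subcube_subset_slice (h : subcube a S ⊆ C) (hi : i ∉ S) :
    subcube a S ⊆ slice C i (a i) :=
  fun _ hf => ⟨h hf, hf i hi⟩

lemma subcube_update_erase_subset_slice (h : subcube a S ⊆ C) (hi : i ∈ S) (b : Bool) :
    subcube (Function.update a i b) (S.erase i) ⊆ slice C i b := fun _ hf =>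
  ⟨h (subcube_eq_of_mem (update_mem_subcube hi b) ▸ subcube_mono (S.erase_subset i) hf),
    (hf i (S.notMem_erase i)).trans (Function.update_self ..)⟩

lemma Shatters.slice_erase (h : Shatters C S) (hi : i ∈ S) (b : Bool) :
    Shatters (slice C i b) (S.erase i) := fun f => by
  obtain ⟨c, hc, hcf⟩ := h (Function.update f i b)
  refine ⟨c, ⟨hc, by simpa using hcf i hi⟩, fun x hx => ?_⟩
  rw [hcf x (Finset.mem_of_mem_erase hx), Function.update_of_ne (Finset.ne_of_mem_erase hx)]

lemma ncard_union_union_image_inter_le {α : Type*} [Finite α] (s t : Set α) (φ : α → α) :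
    (s ∪ t ∪ φ '' (s ∩ t)).ncard ≤ s.ncard + t.ncard :=
  calc (s ∪ t ∪ φ '' (s ∩ t)).ncard ≤ (s ∪ t).ncard + (φ '' (s ∩ t)).ncard :=
        Set.ncard_union_le _ _
    _ ≤ (s ∪ t).ncard + (s ∩ t).ncard := Nat.add_le_add_left Set.ncard_image_le _
    _ = s.ncard + t.ncard := Set.ncard_union_add_ncard_inter s t

lemma stronglyShattered_subset_slices (C : Set (Fin n → Bool)) (i : Fin n) :
    stronglyShattered C ⊆
      stronglyShattered (slice C i false) ∪ stronglyShattered (slice C i true) ∪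
        insert i ''
          (stronglyShattered (slice C i false) ∩ stronglyShattered (slice C i true)) := by
  intro S hS
  obtain ⟨a, ha⟩ := stronglyShatters_iff.1 hS
  by_cases hi : i ∈ S
  · refine Or.inr ⟨S.erase i, ⟨?_, ?_⟩, Finset.insert_erase hi⟩ <;>
      exact stronglyShatters_iff.2 ⟨_, subcube_update_erase_subset_slice ha hi _⟩
  · have h : S ∈ stronglyShattered (slice C i (a i)) :=
      stronglyShatters_iff.2 ⟨a, subcube_subset_slice ha hi⟩
    cases hai : a i <;> rw [hai] at h
    exacts [Or.inl (Or.inl h), Or.inl (Or.inr h)]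

lemma ncard_stronglyShattered_le_add_slices (C : Set (Fin n → Bool)) (i : Fin n) :
    (stronglyShattered C).ncard ≤
      (stronglyShattered (slice C i false)).ncard + (stronglyShattered (slice C i true)).ncard :=
  (Set.ncard_le_ncard (stronglyShattered_subset_slices C i)).trans
    (ncard_union_union_image_inter_le _ _ _)

lemma insert_mem_stronglyShattered_of_ncard_eq
    (heq : (stronglyShattered C).ncard =
      (stronglyShattered (slice C i false)).ncard + (stronglyShattered (slice C i true)).ncard)
    (h0 : S ∈ stronglyShattered (slice C i false))
    (h1 : S ∈ stronglyShattered (slice C i true)) :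
    insert i S ∈ stronglyShattered C := by
  have hle := ncard_union_union_image_inter_le
    (stronglyShattered (slice C i false)) (stronglyShattered (slice C i true)) (insert i)
  rw [Set.eq_of_subset_of_ncard_le (stronglyShattered_subset_slices C i) (heq ▸ hle)]
  exact Or.inr ⟨S, ⟨h0, h1⟩, rfl⟩

end Slices

section Counting

variable {C : Set (Fin n → Bool)}

lemma stronglyShattered_subset_singleton_empty (hC : C.Subsingleton) :
    stronglyShattered C ⊆ {∅} := fun S hS => by
  obtain ⟨a, ha⟩ := stronglyShatters_iff.1 hS
  refine Finset.eq_empty_of_forall_notMem fun i hi => ?_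
  have := hC (ha (update_mem_subcube hi (!a i))) (ha (mem_subcube_self a S))
  simpa using congrFun this i

/-- Reverse Sauer–Shelah inequality. -/
theorem ncard_stronglyShattered_le (C : Set (Fin n → Bool)) :
    (stronglyShattered C).ncard ≤ C.ncard := by
  by_cases hC : C.Subsingleton
  · rcases C.eq_empty_or_nonempty with rfl | hne
    · have : stronglyShattered (∅ : Set (Fin n → Bool)) = ∅ :=
        Set.eq_empty_of_forall_notMem fun S hS =>
          let ⟨a, ha⟩ := stronglyShatters_iff.1 hS
          ha (mem_subcube_self a S)
      simp [this]
    · calc (stronglyShattered C).ncard ≤ ({∅} : Set (Finset (Fin n))).ncard :=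
            Set.ncard_le_ncard (stronglyShattered_subset_singleton_empty hC)
        _ ≤ C.ncard := by rw [Set.ncard_singleton]; exact (Set.ncard_pos).2 hne
  · obtain ⟨f, hf, g, hg, hfg⟩ := Set.not_subsingleton_iff.1 hC
    obtain ⟨i, hi⟩ := Function.ne_iff.1 hfg
    calc (stronglyShattered C).ncard ≤ _ := ncard_stronglyShattered_le_add_slices C i
      _ ≤ (slice C i false).ncard + (slice C i true).ncard :=
          Nat.add_le_add (ncard_stronglyShattered_le _) (ncard_stronglyShattered_le _)
      _ = C.ncard := ncard_slice_false_add_ncard_slice_true C i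
termination_by C.ncard
decreasing_by all_goals exact ncard_slice_lt hf hg hi _

/-- Pajor's inequality, transported from `Finset.card_le_card_shatterer` by identifying a concept
with the set of points it labels `true`. -/
theorem ncard_le_ncard_shattered (C : Set (Fin n → Bool)) : C.ncard ≤ (shattered C).ncard := by
  classical
  let φ : (Fin n → Bool) → Finset (Fin n) := fun f => Finset.univ.filter (f · = true)
  have hφ : φ.Injective := fun f g h =>
    funext fun x => Bool.eq_iff_iff.2 (by simpa [φ] using Finset.ext_iff.1 h x)
  let 𝒜 := C.toFinite.toFinset.image φ
  have h𝒜 : (𝒜.shatterer : Set (Finset (Fin n))) ⊆ shattered C := fun S hS f => by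
    obtain ⟨u, hu, hSu⟩ :=
      Finset.mem_shatterer.1 hS (Finset.filter_subset (f · = true) S)
    obtain ⟨c, hc, rfl⟩ := Finset.mem_image.1 hu
    refine ⟨c, C.toFinite.mem_toFinset.1 hc, fun x hx => Bool.eq_iff_iff.2 ?_⟩
    simpa [φ, hx] using Finset.ext_iff.1 hSu x
  calc C.ncard = (C.toFinite.toFinset.image φ).card := by
        rw [Set.ncard_eq_toFinset_card C, Finset.card_image_of_injective _ hφ]
    _ ≤ 𝒜.shatterer.card := Finset.card_le_card_shatterer 𝒜
    _ = (𝒜.shatterer : Set (Finset (Fin n))).ncard := (Set.ncard_coe_finset _).symm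
    _ ≤ (shattered C).ncard := Set.ncard_le_ncard h𝒜

theorem Extremal.ncard_stronglyShattered (hC : Extremal C) :
    (stronglyShattered C).ncard = C.ncard := by
  have : stronglyShattered C = shattered C :=
    Set.ext fun S => ⟨StronglyShatters.shatters, hC S⟩
  exact (ncard_stronglyShattered_le C).antisymm (this ▸ ncard_le_ncard_shattered C)

lemma ncard_stronglyShattered_eq_add_slices (h : (stronglyShattered C).ncard = C.ncard)
    (i : Fin n) :
    (stronglyShattered C).ncard =
      (stronglyShattered (slice C i false)).ncard + (stronglyShattered (slice C i true)).ncard := by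
  have := ncard_stronglyShattered_le_add_slices C i
  have := ncard_stronglyShattered_le (slice C i false)
  have := ncard_stronglyShattered_le (slice C i true)
  have := ncard_slice_false_add_ncard_slice_true C i
  omega

lemma ncard_stronglyShattered_slice (h : (stronglyShattered C).ncard = C.ncard) (i : Fin n)
    (b : Bool) : (stronglyShattered (slice C i b)).ncard = (slice C i b).ncard := by
  have := ncard_stronglyShattered_eq_add_slices h i
  have := ncard_stronglyShattered_le (slice C i false)
  have := ncard_stronglyShattered_le (slice C i true)
  have := ncard_slice_false_add_ncard_slice_true C i
  cases b <;> omega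

theorem extremal_of_ncard_stronglyShattered_eq {C : Set (Fin n → Bool)}
    (h : (stronglyShattered C).ncard = C.ncard) : Extremal C := by
  intro S hS
  rcases S.eq_empty_or_nonempty with rfl | ⟨i, hi⟩
  · obtain ⟨a, ha, -⟩ := hS fun _ => false
    refine stronglyShatters_iff.2 ⟨a, fun f hf => ?_⟩
    rwa [funext fun x => hf x (Finset.notMem_empty x)]
  obtain ⟨f, hf, hfi⟩ := hS fun _ => false
  obtain ⟨g, hg, hgi⟩ := hS fun _ => true
  have hfg : f i ≠ g i := by simp [hfi i hi, hgi i hi]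
  have hslice (b : Bool) : S.erase i ∈ stronglyShattered (slice C i b) :=
    extremal_of_ncard_stronglyShattered_eq (ncard_stronglyShattered_slice h i b) _
      (hS.slice_erase hi b)
  have := insert_mem_stronglyShattered_of_ncard_eq
    (ncard_stronglyShattered_eq_add_slices h i) (hslice false) (hslice true)
  rwa [Finset.insert_erase hi] at this
termination_by C.ncard
decreasing_by exact ncard_slice_lt hf hg hfg b

theorem extremal_iff_ncard_stronglyShattered :
    Extremal C ↔ (stronglyShattered C).ncard = C.ncard :=
  ⟨Extremal.ncard_stronglyShattered, extremal_of_ncard_stronglyShattered_eq⟩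

theorem Extremal.slice (hC : Extremal C) (i : Fin n) (b : Bool) : Extremal (slice C i b) :=
  extremal_of_ncard_stronglyShattered_eq
    (ncard_stronglyShattered_slice hC.ncard_stronglyShattered i b)

end Counting

theorem IsMaximalCube.eq_of_isCube {C B B' : Set (Fin n → Bool)} {S : Finset (Fin n)}
    (hC : Extremal C) (hB : IsMaximalCube C B S) (hB' : IsCube C B' S) : B' = B := by
  obtain ⟨a, ha⟩ := hB.1.nonempty
  obtain ⟨a', ha'⟩ := hB'.nonempty
  obtain rfl := hB.1.eq_subcube ha
  obtain rfl := hB'.eq_subcube ha'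
  by_cases hsame : a' ∈ subcube a S
  · exact subcube_eq_of_mem hsame
  obtain ⟨i, hiS, hi⟩ : ∃ i ∉ S, a' i ≠ a i := by simpa [subcube] using hsame
  have hslice (b : Bool) : S ∈ stronglyShattered (slice C i b) := by
    rcases eq_or_ne b (a i) with rfl | hb
    · exact stronglyShatters_iff.2 ⟨a, subcube_subset_slice hB.1.1 hiS⟩
    · rw [Bool.eq_not.2 hb, ← Bool.eq_not.2 hi]
      exact stronglyShatters_iff.2 ⟨a', subcube_subset_slice hB'.1 hiS⟩
  -- Both slices contain a cube with dimension set `S`, so `C` has one with `insert i S`; its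
  -- face on the side of `a` is `subcube a S` by induction, contradicting maximality.
  obtain ⟨a₃, h₃⟩ := stronglyShatters_iff.1 <| insert_mem_stronglyShattered_of_ncard_eq
    (ncard_stronglyShattered_eq_add_slices hC.ncard_stronglyShattered i) (hslice false)
    (hslice true)
  have hface : subcube (Function.update a₃ i (a i)) S ⊆ slice C i (a i) := by
    simpa [Finset.erase_insert hiS] using
      subcube_update_erase_subset_slice h₃ (S.mem_insert_self i) (a i)
  have hface_eq : subcube (Function.update a₃ i (a i)) S = subcube a S :=
    (hB.of_subset (subcube_subset_slice hB.1.1 hiS) (slice_subset C i _)).eq_of_isCube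
      (hC.slice i (a i)) (isCube_subcube hface)
  have ha₃ : a ∈ subcube a₃ (insert i S) :=
    subcube_eq_of_mem (update_mem_subcube (S.mem_insert_self i) _) ▸
      subcube_mono (S.subset_insert i) (hface_eq ▸ mem_subcube_self a S)
  exact absurd (subcube_eq_of_mem ha₃ ▸ h₃) ((isMaximalCube_subcube_iff.1 hB).2 i hiS)
termination_by C.ncard
decreasing_by
  exact ncard_slice_lt (hB'.1 (mem_subcube_self a' S)) (hB.1.1 (mem_subcube_self a S)) hi _

section Corners

variable {C : Set (Fin n → Bool)} {S : Finset (Fin n)} {c : Fin n → Bool}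

theorem IsMaximalCube.not_stronglyShatters_diff_singleton (hC : Extremal C)
    (h : IsMaximalCube C (subcube c S) S) : ¬ StronglyShatters (C \ {c}) S := by
  rintro ⟨B, hB⟩
  have hBc := h.eq_of_isCube hC (hB.mono Set.sdiff_subset)
  exact (hB.1 (hBc ▸ mem_subcube_self c S)).2 rfl

theorem StronglyShatters.diff_singleton (hS : StronglyShatters C S)
    (h : ¬ IsMaximalCube C (subcube c S) S) : StronglyShatters (C \ {c}) S := by
  obtain ⟨a, ha⟩ := stronglyShatters_iff.1 hS
  by_cases hca : c ∈ subcube a S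
  · rw [← subcube_eq_of_mem hca] at ha
    obtain ⟨i, hiS, hi⟩ : ∃ i ∉ S, subcube c (insert i S) ⊆ C := by
      simpa [isMaximalCube_subcube_iff, ha] using h
    have hflip : Function.update c i (!c i) ∈ subcube c (insert i S) :=
      update_mem_subcube (S.mem_insert_self i) _
    refine stronglyShatters_iff.2 ⟨Function.update c i (!c i), fun f hf => ⟨hi ?_, ?_⟩⟩
    · exact subcube_eq_of_mem hflip ▸ subcube_mono (S.subset_insert i) hf
    · rintro rfl
      simpa using hf i hiS
  · exact stronglyShatters_iff.2 ⟨a, fun f hf => ⟨ha hf, fun hfc => hca (hfc ▸ hf)⟩⟩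

theorem stronglyShattered_diff_singleton (hC : Extremal C) :
    stronglyShattered (C \ {c}) = stronglyShattered C \ {S | IsMaximalCube C (subcube c S) S} :=
  Set.ext fun _ => ⟨fun h => ⟨h.mono Set.sdiff_subset,
    fun hmax => hmax.not_stronglyShatters_diff_singleton hC h⟩, fun h => h.1.diff_singleton h.2⟩

theorem extremal_diff_singleton_iff (hC : Extremal C) (hc : c ∈ C) :
    Extremal (C \ {c}) ↔ {S | IsMaximalCube C (subcube c S) S}.ncard = 1 := by
  have hM : {S | IsMaximalCube C (subcube c S) S} ⊆ stronglyShattered C := fun _ h => ⟨_, h.1⟩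
  have hMC := (Set.ncard_le_ncard hM).trans_eq hC.ncard_stronglyShattered
  have hCpos : 0 < C.ncard := (Set.ncard_pos).2 ⟨c, hc⟩
  rw [extremal_iff_ncard_stronglyShattered, stronglyShattered_diff_singleton hC,
    Set.ncard_sdiff hM, hC.ncard_stronglyShattered, Set.ncard_sdiff_singleton_of_mem hc]
  omega

theorem setOf_isMaximalCube_mem_eq_image (C : Set (Fin n → Bool)) (c : Fin n → Bool) :
    {B | (∃ S, IsMaximalCube C B S) ∧ c ∈ B} =
      subcube c '' {S | IsMaximalCube C (subcube c S) S} := by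
  ext B
  refine ⟨fun ⟨⟨S, hB⟩, hc⟩ => ?_, ?_⟩
  · obtain rfl := hB.1.eq_subcube hc
    exact ⟨S, hB, rfl⟩
  · rintro ⟨S, hS, rfl⟩
    exact ⟨⟨S, hS⟩, mem_subcube_self c S⟩

end Corners

/-- A concept `c` of an extremal class `C` is a corner (i.e. `C \ {c}` is
extremal) iff `c` lies in exactly one maximal cube of `C`. -/
theorem corner_iff_unique_maximal_cube (n : ℕ) (C : Set (Fin n → Bool))
    (c : Fin n → Bool) (hC : Extremal C) (hc : c ∈ C) :
    Extremal (C \ {c}) ↔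
      ∃! B : Set (Fin n → Bool),
        (∃ S : Finset (Fin n), IsCube C B S ∧
          ∀ B' S', IsCube C B' S' → B ⊆ B' → B = B') ∧ c ∈ B := by
  rw [extremal_diff_singleton_iff hC hc,
    ← Set.ncard_image_of_injective _ (subcube_injective c),
    ← setOf_isMaximalCube_mem_eq_image, Set.ncard_eq_one]
  exact exists_congr fun _ => Set.eq_singleton_iff_unique_mem
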